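/- Let n ≥ 2 and let A₁,…,A_n be r×r Hermitian complex matrices and B_{ij} (1 ≤ i < j ≤ n) arbitrary r×r complex matrices. Suppose the matrix ∑_{1 ≤ i < j ≤ n} (A_iA_j + A_jA_i − B_{ij}B_{ij}* − B_{ij}*B_{ij}) is positive definite, and that for some index k the matrix ∑_{i≠k} A_i is positive semidefinite. Then ∑_{i≠k} A_i is positive definite. -/

import Mathlib

/-!
If `v ≠ 0` lies in the kernel of `S = ∑_{i ≠ k} A i`, put `a i = A i v`; then `∑ i, a i = a k`.
Since `∑_{i<j} (A i A j + A j A i) = (∑ A i)² - ∑ (A i)²` and the `B`-terms are negative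
semidefinite, the quadratic form of the `σ₂`-matrix at `v` is at most
`‖∑ a i‖² - ∑ ‖a i‖² = -∑_{i ≠ k} ‖a i‖² ≤ 0`, contradicting positive definiteness.
So the positive semidefinite `S` has trivial kernel.
-/

open Matrix ComplexOrder

open Finset in
theorem Finset.sum_filter_lt_add_swap_add_sum_diag {ι M : Type*} [Fintype ι] [LinearOrder ι]
    [AddCommMonoid M] (f : ι → ι → M) :
    ∑ ij ∈ univ.filter (fun ij : ι × ι => ij.1 < ij.2), (f ij.1 ij.2 + f ij.2 ij.1)
      + ∑ i, f i i = ∑ i, ∑ j, f i j := by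
  have htrichotomy : ∀ i j, f i j =
      ((if i < j then f i j else 0) + if j < i then f i j else 0) + if i = j then f i j else 0 := by
    intro i j
    rcases lt_trichotomy i j with h | rfl | h
    · simp [h, h.not_gt, h.ne]
    · simp
    · simp [h, h.not_gt, h.ne']
  rw [sum_congr rfl fun i _ => sum_congr rfl fun j _ => htrichotomy i j]
  simp only [sum_filter, Fintype.sum_prod_type, sum_add_distrib, sum_ite_eq,
    mem_univ, if_true]
  rw [sum_comm (f := fun i j => if j < i then f i j else 0)]

namespace Matrix

variable {ι m 𝕜 : Type*} [Fintype ι] [LinearOrder ι] [Fintype m] [RCLike 𝕜]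

theorem IsHermitian.star_dotProduct_mul_mulVec {R : Type*} [CommSemiring R] [StarRing R]
    {A : Matrix m m R} (hA : A.IsHermitian) (B : Matrix m m R) (v : m → R) :
    star v ⬝ᵥ ((A * B) *ᵥ v) = star (A *ᵥ v) ⬝ᵥ (B *ᵥ v) := by
  rw [← mulVec_mulVec, dotProduct_mulVec, star_mulVec, hA.eq]

/-- The pointwise form of `(√−1 F_H)² ∧ ω^{n−2} / η` in the `σ₂`-equation. -/
def sigmaTwoForm (A : ι → Matrix m m 𝕜) (B : ι → ι → Matrix m m 𝕜) : Matrix m m 𝕜 :=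
  ∑ ij ∈ Finset.univ.filter (fun ij : ι × ι => ij.1 < ij.2),
    (A ij.1 * A ij.2 + A ij.2 * A ij.1
      - B ij.1 ij.2 * (B ij.1 ij.2)ᴴ - (B ij.1 ij.2)ᴴ * B ij.1 ij.2)

theorem star_dotProduct_sigmaTwoForm_mulVec_le (A : ι → Matrix m m 𝕜) (B : ι → ι → Matrix m m 𝕜)
    (hA : ∀ i, (A i).IsHermitian) (v : m → 𝕜) :
    star v ⬝ᵥ (sigmaTwoForm A B *ᵥ v) ≤
      star (∑ i, A i *ᵥ v) ⬝ᵥ (∑ i, A i *ᵥ v) - ∑ i, star (A i *ᵥ v) ⬝ᵥ (A i *ᵥ v) := by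
  set a := fun i => A i *ᵥ v
  have hterm : ∀ i j, star v ⬝ᵥ ((A i * A j + A j * A i - B i j * (B i j)ᴴ - (B i j)ᴴ * B i j) *ᵥ v)
      ≤ star (a i) ⬝ᵥ a j + star (a j) ⬝ᵥ a i := by
    intro i j
    rw [sub_mulVec, sub_mulVec, add_mulVec, dotProduct_sub, dotProduct_sub, dotProduct_add,
      (hA i).star_dotProduct_mul_mulVec, (hA j).star_dotProduct_mul_mulVec]
    have hBBstar := (posSemidef_self_mul_conjTranspose (B i j)).dotProduct_mulVec_nonneg v
    have hBstarB := (posSemidef_conjTranspose_mul_self (B i j)).dotProduct_mulVec_nonneg v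
    exact (sub_le_self _ hBstarB).trans (sub_le_self _ hBBstar)
  have hexpand : star (∑ i, a i) ⬝ᵥ (∑ i, a i) = ∑ i, ∑ j, star (a i) ⬝ᵥ a j := by
    simp only [star_sum, sum_dotProduct, dotProduct_sum]
    exact Finset.sum_comm
  calc star v ⬝ᵥ (sigmaTwoForm A B *ᵥ v)
      ≤ ∑ ij ∈ Finset.univ.filter (fun ij : ι × ι => ij.1 < ij.2),
          (star (a ij.1) ⬝ᵥ a ij.2 + star (a ij.2) ⬝ᵥ a ij.1) := by
        rw [sigmaTwoForm, sum_mulVec, dotProduct_sum]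
        exact Finset.sum_le_sum fun ij _ => hterm ij.1 ij.2
    _ = star (∑ i, a i) ⬝ᵥ (∑ i, a i) - ∑ i, star (a i) ⬝ᵥ a i := by
        rw [hexpand, ← Finset.sum_filter_lt_add_swap_add_sum_diag, add_sub_cancel_right]

theorem posDef_sum_erase_of_posDef_sigmaTwoForm {A : ι → Matrix m m 𝕜} (B : ι → ι → Matrix m m 𝕜)
    (hA : ∀ i, (A i).IsHermitian) (hσ : (sigmaTwoForm A B).PosDef) (k : ι)
    (hS : (∑ i ∈ Finset.univ.erase k, A i).PosSemidef) :
    (∑ i ∈ Finset.univ.erase k, A i).PosDef := by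
  refine .of_dotProduct_mulVec_pos hS.1 fun v hv =>
    (hS.dotProduct_mulVec_nonneg v).lt_of_ne fun hzero => ?_
  have hker : (∑ i ∈ Finset.univ.erase k, A i) *ᵥ v = 0 :=
    (hS.dotProduct_mulVec_zero_iff v).mp hzero.symm
  have hsum : ∑ i, A i *ᵥ v = A k *ᵥ v := by
    rw [← sum_mulVec, ← Finset.add_sum_erase _ _ (Finset.mem_univ k), add_mulVec, hker, add_zero]
  have hle := star_dotProduct_sigmaTwoForm_mulVec_le A B hA v
  rw [hsum, ← Finset.add_sum_erase _ _ (Finset.mem_univ k), sub_add_cancel_left] at hle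
  have hnonneg := Finset.sum_nonneg fun i (_ : i ∈ Finset.univ.erase k) =>
    dotProduct_star_self_nonneg (A i *ᵥ v)
  exact (hσ.dotProduct_mulVec_pos hv).not_ge (hle.trans (neg_nonpos.mpr hnonneg))

end Matrix

theorem stmt9_general (n r : ℕ) (A : Fin n → Matrix (Fin r) (Fin r) ℂ)
    (B : Fin n → Fin n → Matrix (Fin r) (Fin r) ℂ)
    (hA : ∀ i, (A i).IsHermitian)
    (hpos : (∑ ij ∈ Finset.univ.filter (fun ij : Fin n × Fin n => ij.1 < ij.2),
        (A ij.1 * A ij.2 + A ij.2 * A ij.1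
          - B ij.1 ij.2 * (B ij.1 ij.2)ᴴ - (B ij.1 ij.2)ᴴ * B ij.1 ij.2)).PosDef)
    (k : Fin n)
    (hsemi : (∑ i ∈ Finset.univ.erase k, A i).PosSemidef) :
    (∑ i ∈ Finset.univ.erase k, A i).PosDef :=
  posDef_sum_erase_of_posDef_sigmaTwoForm B hA hpos k hsemi

theorem stmt9 (n r : ℕ) (hn : 2 ≤ n) (A : Fin n → Matrix (Fin r) (Fin r) ℂ)
    (B : Fin n → Fin n → Matrix (Fin r) (Fin r) ℂ)
    (hA : ∀ i, (A i).IsHermitian)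
    (hpos : (∑ ij ∈ Finset.univ.filter (fun ij : Fin n × Fin n => ij.1 < ij.2),
        (A ij.1 * A ij.2 + A ij.2 * A ij.1
          - B ij.1 ij.2 * (B ij.1 ij.2)ᴴ - (B ij.1 ij.2)ᴴ * B ij.1 ij.2)).PosDef)
    (k : Fin n)
    (hsemi : (∑ i ∈ Finset.univ.erase k, A i).PosSemidef) :
    (∑ i ∈ Finset.univ.erase k, A i).PosDef :=
  stmt9_general n r A B hA hpos k hsemi
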